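/- arXiv:1603.02761 — 3 statements merged into one kernel-verified Lean document; each statement's English description precedes it below -/
import Mathlib

section
/- Let V ⊆ ℂⁿ be an algebraic variety. Then the geometric tangent cone of V at infinity is contained in the algebraic tangent cone of V at infinity: C_{g,∞}(V) ⊆ C_{a,∞}(V). -/
open Filter MvPolynomial
open scoped Topology

noncomputable section

/-- `ℂⁿ` with the Euclidean norm. -/
abbrev ECn (n : ℕ) := EuclideanSpace ℂ (Fin n)

/-- `V ⊆ ℂⁿ` is an algebraic variety if it is the common zero set of a set of polynomials. -/
def IsAlgebraicVariety {n : ℕ} (V : Set (ECn n)) : Prop :=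
  ∃ S : Set (MvPolynomial (Fin n) ℂ), V = {x : ECn n | ∀ f ∈ S, eval (x : Fin n → ℂ) f = 0}

/-- The geometric tangent cone of `V` at infinity. -/
def geomCone {n : ℕ} (V : Set (ECn n)) : Set (ECn n) :=
  {v | ∃ (x : ℕ → ECn n) (t : ℕ → ℂ), (∀ k, x k ∈ V) ∧
    Tendsto (fun k => ‖x k‖) atTop atTop ∧ Tendsto (fun k => t k • x k) atTop (𝓝 v)}

/-- The homogeneous component of `f` of highest degree (`0` if `f = 0`). -/
def leadingForm {n : ℕ} (f : MvPolynomial (Fin n) ℂ) : MvPolynomial (Fin n) ℂ :=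
  homogeneousComponent f.totalDegree f

/-- The algebraic tangent cone of `V` at infinity. -/
def algCone {n : ℕ} (V : Set (ECn n)) : Set (ECn n) :=
  {v | ∀ f : MvPolynomial (Fin n) ℂ, (∀ x ∈ V, eval (x : Fin n → ℂ) f = 0) →
    eval (v : Fin n → ℂ) (leadingForm f) = 0}
lemma eval_smul_of_isHomogeneous {n m : ℕ} {φ : MvPolynomial (Fin n) ℂ}
    (hφ : φ.IsHomogeneous m) (t : ℂ) (x : Fin n → ℂ) :
    eval (t • x) φ = t ^ m * eval x φ := by
  rw [eval_eq', eval_eq', Finset.mul_sum]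
  refine Finset.sum_congr rfl fun d hd => ?_
  have hdm : ∑ i, d i = m := by
    have h := hφ (mem_support_iff.mp hd)
    simpa [Finsupp.weight_apply, Finsupp.sum_fintype] using h
  simp only [Pi.smul_apply, smul_eq_mul, mul_pow]
  rw [Finset.prod_mul_distrib, Finset.prod_pow_eq_pow_sum, hdm]
  ring

theorem geomCone_subset_algCone {n : ℕ} (V : Set (ECn n)) (hV : IsAlgebraicVariety V) :
    geomCone V ⊆ algCone V := by
  rintro v ⟨x, t, hxV, hnorm, hlim⟩ f hf
  set d := f.totalDegree with hd
  -- t → 0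
  have ht0 : Tendsto t atTop (𝓝 0) := by
    rw [tendsto_zero_iff_norm_tendsto_zero]
    have hdiv : Tendsto (fun k => ‖t k • x k‖ / ‖x k‖) atTop (𝓝 0) :=
      hlim.norm.div_atTop hnorm
    refine hdiv.congr' ?_
    filter_upwards [hnorm.eventually_gt_atTop 0] with k hk
    rw [norm_smul, mul_div_assoc, div_self (ne_of_gt hk), mul_one]
  -- continuity of evaluation
  have heval : ∀ g : MvPolynomial (Fin n) ℂ,
      Tendsto (fun k => eval ((t k • x k : ECn n) : Fin n → ℂ) g) atTop
        (𝓝 (eval (v : Fin n → ℂ) g)) := fun g =>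
    (((MvPolynomial.continuous_eval g).comp (PiLp.continuous_ofLp 2 _)).tendsto v).comp hlim
  -- key identity
  have key : ∀ k, (∑ j ∈ Finset.range (d + 1),
      t k ^ (d - j) * eval ((t k • x k : ECn n) : Fin n → ℂ) (homogeneousComponent j f)) = 0 := by
    intro k
    have hcoe : ((t k • x k : ECn n) : Fin n → ℂ) = t k • ((x k : ECn n) : Fin n → ℂ) := rfl
    have hsum : ∀ j ∈ Finset.range (d + 1),
        t k ^ (d - j) * eval ((t k • x k : ECn n) : Fin n → ℂ) (homogeneousComponent j f)
          = t k ^ d * eval ((x k : ECn n) : Fin n → ℂ) (homogeneousComponent j f) := by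
      intro j hj
      rw [hcoe, eval_smul_of_isHomogeneous (homogeneousComponent_isHomogeneous j f),
        ← mul_assoc, ← pow_add]
      congr 2
      rw [Finset.mem_range] at hj
      omega
    rw [Finset.sum_congr rfl hsum, ← Finset.mul_sum, ← map_sum]
    simp only [hd, sum_homogeneousComponent]
    rw [hf _ (hxV k), mul_zero]
  -- limits of each term
  have hterm : ∀ j ∈ Finset.range (d + 1),
      Tendsto (fun k => t k ^ (d - j) * eval ((t k • x k : ECn n) : Fin n → ℂ)
        (homogeneousComponent j f)) atTop
        (𝓝 (if j = d then eval (v : Fin n → ℂ) (leadingForm f) else 0)) := by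
    intro j hj
    rcases eq_or_ne j d with rfl | hne
    · simp only [Nat.sub_self, pow_zero, one_mul, if_pos rfl]
      exact heval (leadingForm f)
    · rw [if_neg hne]
      have h1 : Tendsto (fun k => t k ^ (d - j)) atTop (𝓝 0) := by
        have : d - j ≠ 0 := by
          simp only [Finset.mem_range] at hj; omega
        simpa [zero_pow this] using ht0.pow (d - j)
      simpa using h1.mul (heval (homogeneousComponent j f))
  have hsumlim : Tendsto (fun k => ∑ j ∈ Finset.range (d + 1),
      t k ^ (d - j) * eval ((t k • x k : ECn n) : Fin n → ℂ) (homogeneousComponent j f)) atTop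
      (𝓝 (∑ j ∈ Finset.range (d + 1),
        if j = d then eval (v : Fin n → ℂ) (leadingForm f) else 0)) :=
    tendsto_finset_sum _ hterm
  have hval : (∑ j ∈ Finset.range (d + 1),
      if j = d then eval (v : Fin n → ℂ) (leadingForm f) else 0)
        = eval (v : Fin n → ℂ) (leadingForm f) := by
    rw [Finset.sum_ite_eq' _ d, if_pos (Finset.self_mem_range_succ d)]
  rw [hval] at hsumlim
  have : Tendsto (fun _ : ℕ => (0 : ℂ)) atTop (𝓝 (eval (v : Fin n → ℂ) (leadingForm f))) := by
    simpa only [key] using hsumlim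
  exact (tendsto_nhds_unique tendsto_const_nhds this).symm
end
end

section
/- Let V := {(x, y) ∈ ℂ² : x² − y³ = 0}. Then the geometric tangent cone of V at infinity equals the line {(x, y) ∈ ℂ² : y = 0}. -/
open Filter MvPolynomial
open scoped Topology

noncomputable section

theorem geomCone_cusp :
    geomCone {p : ECn 2 | (p 0) ^ 2 - (p 1) ^ 3 = 0} = {p : ECn 2 | p 1 = 0} := by
  ext v
  simp only [geomCone, Set.mem_setOf_eq]
  constructor
  · rintro ⟨x, t, hmem, hnorm, hlim⟩
    have h0 : Tendsto (fun k => t k * x k 0) atTop (𝓝 (v 0)) := by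
      have := ((EuclideanSpace.proj (0 : Fin 2) :
        ECn 2 →L[ℂ] ℂ).continuous.tendsto v).comp hlim
      simpa [Function.comp_def] using this
    have h1 : Tendsto (fun k => t k * x k 1) atTop (𝓝 (v 1)) := by
      have := ((EuclideanSpace.proj (1 : Fin 2) :
        ECn 2 →L[ℂ] ℂ).continuous.tendsto v).comp hlim
      simpa [Function.comp_def] using this
    have ht0 : Tendsto t atTop (𝓝 0) := by
      have hdiv : Tendsto (fun k => ‖t k • x k‖ / ‖x k‖) atTop (𝓝 0) :=
        hlim.norm.div_atTop hnorm
      rw [tendsto_zero_iff_norm_tendsto_zero]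
      refine hdiv.congr' ?_
      filter_upwards [hnorm.eventually_gt_atTop 0] with k hk
      rw [norm_smul, mul_div_assoc, div_self hk.ne', mul_one]
    have key : Tendsto (fun k => (t k * x k 1) ^ 3) atTop (𝓝 ((v 1) ^ 3)) := h1.pow 3
    have key2 : Tendsto (fun k => (t k * x k 1) ^ 3) atTop (𝓝 ((v 0) ^ 2 * 0)) := by
      refine ((h0.pow 2).mul ht0).congr fun k => ?_
      have h := sub_eq_zero.mp (hmem k)
      calc (t k * x k 0) ^ 2 * t k = (x k 0) ^ 2 * t k ^ 3 := by ring
        _ = (x k 1) ^ 3 * t k ^ 3 := by rw [h]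
        _ = (t k * x k 1) ^ 3 := by ring
    have := tendsto_nhds_unique key key2
    rw [mul_zero] at this
    exact pow_eq_zero_iff (by norm_num) |>.mp this
  · intro hv
    set e := WithLp.equiv 2 (Fin 2 → ℂ)
    refine ⟨fun k => e.symm ![((k : ℂ) + 1) ^ 3, ((k : ℂ) + 1) ^ 2],
      fun k => v 0 / ((k : ℂ) + 1) ^ 3, fun k => ?_, ?_, ?_⟩
    · show (_ : ℂ) ^ 2 - _ ^ 3 = 0
      simp [e, WithLp.equiv_symm_apply, PiLp.toLp_apply]
      ring
    · have hle : ∀ k : ℕ, ((k : ℝ) + 1) ^ 2 ≤ ‖e.symm ![((k : ℂ) + 1) ^ 3, ((k : ℂ) + 1) ^ 2]‖ := by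
        intro k
        rw [EuclideanSpace.norm_eq]
        have hc : ‖(k : ℂ) + 1‖ = (k : ℝ) + 1 := by
          rw [show ((k : ℂ) + 1) = ((k + 1 : ℕ) : ℂ) by push_cast; ring,
            Complex.norm_natCast]
          push_cast; ring
        have h2 : ‖(((k : ℂ)) + 1) ^ 2‖ = ((k : ℝ) + 1) ^ 2 := by
          rw [norm_pow, hc]
        calc ((k : ℝ) + 1) ^ 2 = Real.sqrt ((((k:ℝ)+1)^2) ^ 2) := by
              rw [Real.sqrt_sq (by positivity)]
          _ ≤ _ := by
              apply Real.sqrt_le_sqrt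
              rw [Fin.sum_univ_two]
              simp only [e, WithLp.equiv_symm_apply, PiLp.toLp_apply, Matrix.cons_val_zero, Matrix.cons_val_one,
                Matrix.head_cons, h2]
              exact le_add_of_nonneg_left (by positivity)
      refine tendsto_atTop_mono hle ?_
      have : Tendsto (fun k : ℕ => ((k : ℝ) + 1)) atTop atTop :=
        tendsto_atTop_add_const_right _ 1 tendsto_natCast_atTop_atTop
      exact (tendsto_pow_atTop (n := 2) (by norm_num)).comp this
    · have hv0 : v = e.symm ![v 0, 0] := by
        apply PiLp.ext
        intro i
        fin_cases i <;> simp [e, WithLp.equiv_symm_apply, PiLp.toLp_apply, hv]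
      conv_rhs => rw [hv0]
      have heq : ∀ k : ℕ, (v 0 / ((k : ℂ) + 1) ^ 3) •
          e.symm ![((k : ℂ) + 1) ^ 3, ((k : ℂ) + 1) ^ 2]
          = e.symm ![v 0 / ((k : ℂ) + 1) ^ 3 * ((k : ℂ) + 1) ^ 3,
              v 0 / ((k : ℂ) + 1) ^ 3 * ((k : ℂ) + 1) ^ 2] := by
        intro k
        apply PiLp.ext
        intro i
        fin_cases i <;> simp [e, WithLp.equiv_symm_apply, PiLp.toLp_apply]
      simp only [heq]
      have hcont : Continuous (fun f : Fin 2 → ℂ => (e.symm f : ECn 2)) := by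
        exact (PiLp.continuousLinearEquiv 2 ℂ (fun _ : Fin 2 => ℂ)).symm.continuous
      refine (hcont.tendsto _).comp ?_
      rw [tendsto_pi_nhds]
      intro i
      fin_cases i <;> simp only [Fin.mk_zero, Fin.mk_one, Fin.isValue, Matrix.cons_val_zero,
        Matrix.cons_val_one, Matrix.head_cons]
      all_goals
        have hne : ∀ k : ℕ, ((k : ℂ) + 1) ≠ 0 := by
          intro k
          rw [show ((k : ℂ) + 1) = ((k + 1 : ℕ) : ℂ) by push_cast; ring]
          exact_mod_cast Nat.succ_ne_zero k
      · refine Tendsto.congr (fun k => ?_) tendsto_const_nhds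
        rw [div_mul_cancel₀ _ (pow_ne_zero 3 (hne k))]
      · have heq2 : ∀ k : ℕ, v 0 / ((k : ℂ) + 1) ^ 3 * ((k : ℂ) + 1) ^ 2
            = v 0 / ((k : ℂ) + 1) := by
          intro k
          rw [show ((k : ℂ) + 1) ^ 3 = ((k : ℂ) + 1) * ((k : ℂ) + 1) ^ 2 by ring,
            ← div_div, div_mul_cancel₀ _ (pow_ne_zero 2 (hne k))]
        simp only [heq2]
        rw [tendsto_zero_iff_norm_tendsto_zero]
        have hat : Tendsto (fun k : ℕ => ((k : ℝ) + 1)) atTop atTop :=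
          tendsto_atTop_add_const_right _ 1 tendsto_natCast_atTop_atTop
        refine ((tendsto_const_nhds (x := ‖v 0‖)).div_atTop hat).congr fun k => ?_
        rw [norm_div, show ‖(k : ℂ) + 1‖ = (k : ℝ) + 1 by
          rw [show ((k : ℂ) + 1) = ((k + 1 : ℕ) : ℂ) by push_cast; ring,
            Complex.norm_natCast]
          push_cast; ring]
end
end

section
/- Let I ⊆ ℂ[x,y,z] be the ideal generated by f₁ = x·y and f₂ = z·(x³ − y² + z²). Then the polynomial f = y·z·(y² − z²) equals z·x²·f₁ − y·f₂, so f ∈ I, and f is homogeneous of degree 4 but does not vanish identically on the set V(f₁*, f₂*) = {x = 0} ∪ {y = z = 0}, where f₁* = x·y and f₂* = x³·z are the leading homogeneous components. In particular, C_{a,∞}(V(I)) ⊊ V(f₁*, f₂*). -/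
open MvPolynomial

noncomputable section

/-- The algebraic tangent cone at infinity of a set `V ⊆ ℂⁿ`. -/
def algCone' {n : ℕ} (V : Set (Fin n → ℂ)) : Set (Fin n → ℂ) :=
  {v | ∀ f : MvPolynomial (Fin n) ℂ, (∀ x ∈ V, eval x f = 0) → eval v (leadingForm f) = 0}

lemma leadingForm_of_isHomogeneous {n k : ℕ} {g : MvPolynomial (Fin n) ℂ}
    (hg : g.IsHomogeneous k) (hg0 : g ≠ 0) : leadingForm g = g := by
  rw [leadingForm, hg.totalDegree hg0,
    homogeneousComponent_of_mem ((mem_homogeneousSubmodule _ _).2 hg), if_pos rfl]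

lemma leadingForm_add {n k m : ℕ} {g h : MvPolynomial (Fin n) ℂ}
    (hg : g.IsHomogeneous k) (hh : h.IsHomogeneous m) (hmk : m < k) (hg0 : g ≠ 0) :
    leadingForm (g + h) = g := by
  have hcomp : homogeneousComponent k (g + h) = g := by
    rw [map_add, homogeneousComponent_of_mem ((mem_homogeneousSubmodule _ _).2 hg),
      homogeneousComponent_of_mem ((mem_homogeneousSubmodule _ _).2 hh),
      if_pos rfl, if_neg hmk.ne', add_zero]
  have htd : (g + h).totalDegree = k := by
    refine le_antisymm ((totalDegree_add g h).trans
      (max_le hg.totalDegree_le (hh.totalDegree_le.trans hmk.le))) ?_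
    by_contra hlt
    push_neg at hlt
    exact hg0 (hcomp ▸ homogeneousComponent_eq_zero k (g + h) hlt)
  rw [leadingForm, htd, hcomp]

theorem leading_forms_do_not_cut_out_cone_at_infinity :
    letI f₁ : MvPolynomial (Fin 3) ℂ := X 0 * X 1
    letI f₂ : MvPolynomial (Fin 3) ℂ := X 2 * ((X 0) ^ 3 - (X 1) ^ 2 + (X 2) ^ 2)
    letI f : MvPolynomial (Fin 3) ℂ := X 1 * X 2 * ((X 1) ^ 2 - (X 2) ^ 2)
    letI Z : Set (Fin 3 → ℂ) := {v | eval v (X 0 * X 1 : MvPolynomial (Fin 3) ℂ) = 0 ∧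
      eval v ((X 0) ^ 3 * X 2 : MvPolynomial (Fin 3) ℂ) = 0}
    f = X 2 * (X 0) ^ 2 * f₁ - X 1 * f₂ ∧
    f ∈ Ideal.span {f₁, f₂} ∧
    f.IsHomogeneous 4 ∧
    leadingForm f₁ = X 0 * X 1 ∧
    leadingForm f₂ = (X 0) ^ 3 * X 2 ∧
    Z = {v : Fin 3 → ℂ | v 0 = 0} ∪ {v : Fin 3 → ℂ | v 1 = 0 ∧ v 2 = 0} ∧
    (∃ v ∈ Z, eval v f ≠ 0) ∧
    algCone' {x : Fin 3 → ℂ | eval x f₁ = 0 ∧ eval x f₂ = 0} ⊂ Z := by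
  set f₁ : MvPolynomial (Fin 3) ℂ := X 0 * X 1 with hf₁def
  set f₂ : MvPolynomial (Fin 3) ℂ := X 2 * ((X 0) ^ 3 - (X 1) ^ 2 + (X 2) ^ 2) with hf₂def
  set f : MvPolynomial (Fin 3) ℂ := X 1 * X 2 * ((X 1) ^ 2 - (X 2) ^ 2) with hfdef
  set Z : Set (Fin 3 → ℂ) := {v | eval v (X 0 * X 1 : MvPolynomial (Fin 3) ℂ) = 0 ∧
      eval v ((X 0) ^ 3 * X 2 : MvPolynomial (Fin 3) ℂ) = 0} with hZdef
  set v₀ : Fin 3 → ℂ := ![0, 1, 2] with hv₀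
  -- basic homogeneity facts
  have hf₁hom : f₁.IsHomogeneous 2 := (isHomogeneous_X _ _).mul (isHomogeneous_X _ _)
  have hghom : ((X 0 : MvPolynomial (Fin 3) ℂ) ^ 3 * X 2).IsHomogeneous 4 :=
    (isHomogeneous_X_pow _ _).mul (isHomogeneous_X _ _)
  have hfhom : f.IsHomogeneous 4 := by
    have : f = (X 1) ^ 3 * X 2 - X 1 * X 2 ^ 3 := by rw [hfdef]; ring
    rw [this]
    exact ((isHomogeneous_X_pow _ _).mul (isHomogeneous_X _ _)).sub
      ((isHomogeneous_X _ _).mul (isHomogeneous_X_pow _ _))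
  have hId : f = X 2 * (X 0) ^ 2 * f₁ - X 1 * f₂ := by rw [hfdef, hf₁def, hf₂def]; ring
  -- nonvanishing facts
  have hevalf : eval v₀ f ≠ 0 := by
    rw [hfdef]
    simp [hv₀]
    norm_num
  have hf0 : f ≠ 0 := by
    intro h
    rw [h] at hevalf
    simp at hevalf
  have hf₁0 : f₁ ≠ 0 := by
    intro h
    have : eval (fun _ => (1 : ℂ)) f₁ = 0 := by rw [h]; simp
    simp [f₁] at this
  have hg0 : ((X 0 : MvPolynomial (Fin 3) ℂ) ^ 3 * X 2) ≠ 0 := by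
    intro h
    have : eval (fun _ => (1 : ℂ)) ((X 0 : MvPolynomial (Fin 3) ℂ) ^ 3 * X 2) = 0 := by
      rw [h]; simp
    simp at this
  -- leading forms
  have hLf₁ : leadingForm f₁ = X 0 * X 1 := leadingForm_of_isHomogeneous hf₁hom hf₁0
  have hLf₂ : leadingForm f₂ = (X 0) ^ 3 * X 2 := by
    have hsplit : f₂ = (X 0) ^ 3 * X 2 + ((X 2) ^ 3 - (X 1) ^ 2 * X 2) := by
      rw [hf₂def]; ring
    have hhhom : ((X 2 : MvPolynomial (Fin 3) ℂ) ^ 3 - (X 1) ^ 2 * X 2).IsHomogeneous 3 :=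
      (isHomogeneous_X_pow _ _).sub ((isHomogeneous_X_pow _ _).mul (isHomogeneous_X _ _))
    rw [hsplit]
    exact leadingForm_add hghom hhhom (by norm_num) hg0
  have hLf : leadingForm f = f := leadingForm_of_isHomogeneous hfhom hf0
  -- v₀ ∈ Z
  have hv₀Z : v₀ ∈ Z := by
    rw [hZdef]
    constructor <;> simp [hv₀]
  -- f vanishes on V
  have hfvan : ∀ x ∈ {x : Fin 3 → ℂ | eval x f₁ = 0 ∧ eval x f₂ = 0}, eval x f = 0 := by
    rintro x ⟨h1, h2⟩
    simp [hId, h1, h2]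
  refine ⟨hId, ?_, hfhom, hLf₁, hLf₂, ?_, ⟨v₀, hv₀Z, hevalf⟩, ?_⟩
  · rw [hId]
    exact Ideal.sub_mem _
      (Ideal.mul_mem_left _ _ (Ideal.subset_span (by simp)))
      (Ideal.mul_mem_left _ _ (Ideal.subset_span (by simp)))
  · rw [hZdef]
    ext v
    simp only [Set.mem_setOf_eq, Set.mem_union, map_mul, map_pow, eval_X, mul_eq_zero,
      pow_eq_zero_iff (by norm_num : (3:ℕ) ≠ 0)]
    constructor
    · rintro ⟨h1 | h1, h2 | h2⟩ <;> tauto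
    · rintro (h | ⟨h1, h2⟩) <;> simp [*]
  · rw [Set.ssubset_iff_of_subset]
    · refine ⟨v₀, hv₀Z, fun hc => ?_⟩
      have := hc f hfvan
      rw [hLf] at this
      exact hevalf this
    · intro v hv
      have h1 := hv f₁ (fun x hx => hx.1)
      have h2 := hv f₂ (fun x hx => hx.2)
      rw [hLf₁] at h1
      rw [hLf₂] at h2
      exact ⟨h1, h2⟩
end
end
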